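/- arXiv:2412.12326 — 2 statements merged into one kernel-verified Lean document; each statement's English description precedes it below -/
import Mathlib

section
/- For two joint policies π_old and π_new over a Markov decision process with N agents, the collective return satisfies η(π_new) = η(π_old) + E_{τ∼π_new}[Σ_{i=1}^N Σ_{t=0}^∞ γ^t A_i^{π_old}(s_t, a_t)], where the expectation is over trajectories generated by π_new. -/
open scoped BigOperators

/-- Distribution over states at time `t` of the Markov chain induced by joint policy `π`,
transition kernel `P`, and initial state distribution `d0`. -/
noncomputable def stateDist {S A : Type*} [Fintype S] [Fintype A]
    (P : S → A → S → ℝ) (π : S → A → ℝ) (d0 : S → ℝ) : ℕ → S → ℝ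
  | 0 => d0
  | t + 1 => fun s' => ∑ s, ∑ a, stateDist P π d0 t s * π s a * P s a s'

/-- Expected reward received at time `t` along trajectories of the induced chain. -/
noncomputable def expRew {S A : Type*} [Fintype S] [Fintype A]
    (P : S → A → S → ℝ) (π : S → A → ℝ) (r : S → A → ℝ) (d0 : S → ℝ) (t : ℕ) : ℝ :=
  ∑ s, stateDist P π d0 t s * ∑ a, π s a * r s a

/-- State-value function: expected discounted return starting from state `s`. -/
noncomputable def Vval {S A : Type*} [Fintype S] [Fintype A] [DecidableEq S]
    (γ : ℝ) (P : S → A → S → ℝ) (π : S → A → ℝ) (r : S → A → ℝ) (s : S) : ℝ :=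
  ∑' t : ℕ, γ ^ t * expRew P π r (fun s' => if s' = s then 1 else 0) t

/-- Action-value function: expected discounted return with `s₀ = s`, `a₀ = a` fixed,
and subsequent actions chosen by `π`. -/
noncomputable def Qval {S A : Type*} [Fintype S] [Fintype A]
    (γ : ℝ) (P : S → A → S → ℝ) (π : S → A → ℝ) (r : S → A → ℝ) (s : S) (a : A) : ℝ :=
  r s a + γ * ∑' t : ℕ, γ ^ t * expRew P π r (P s a) t

/-- Individual advantage function. -/
noncomputable def Aval {S A : Type*} [Fintype S] [Fintype A] [DecidableEq S]
    (γ : ℝ) (P : S → A → S → ℝ) (π : S → A → ℝ) (r : S → A → ℝ) (s : S) (a : A) : ℝ :=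
  Qval γ P π r s a - Vval γ P π r s

/-- Collective return: sum over agents of the expected individual discounted return. -/
noncomputable def eta {S A ι : Type*} [Fintype S] [Fintype A] [Fintype ι] [DecidableEq S]
    (γ : ℝ) (P : S → A → S → ℝ) (π : S → A → ℝ) (r : ι → S → A → ℝ) (d0 : S → ℝ) : ℝ :=
  ∑ i, ∑ s, d0 s * Vval γ P π (r i) s

/-- Discounted state visitation measure. -/
noncomputable def dvisit {S A : Type*} [Fintype S] [Fintype A]
    (γ : ℝ) (P : S → A → S → ℝ) (π : S → A → ℝ) (d0 : S → ℝ) (s : S) : ℝ :=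
  ∑' t : ℕ, γ ^ t * stateDist P π d0 t s

/-!
Under a fixed policy `π` the state distribution evolves by the row-stochastic matrix
`M_π s s' = ∑ₐ π(s,a) P(s,a,s')`, so every value is a geometric series of uniformly bounded
terms. By the Bellman equation `Q = r + γ P V`, the expected old-policy advantage at time `t`
along the new chain is the expected reward at time `t` plus `γ^{t+1} E[V(s_{t+1})] - γ^t E[V(s_t)]`.
Summed over `t` the value terms telescope to `-E_{d₀}[V^{π_old}]`, and what remains is
`E_{d₀}[V^{π_new}] - E_{d₀}[V^{π_old}]`, agent by agent.
-/

open Finset Matrix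

namespace Matrix

variable {n : Type*} [Fintype n] [DecidableEq n] {M : Matrix n n ℝ}

theorem norm_mulVec_le_of_mem_rowStochastic (hM : M ∈ rowStochastic ℝ n) (v : n → ℝ) :
    ‖M *ᵥ v‖ ≤ ‖v‖ := by
  refine (pi_norm_le_iff_of_nonneg (norm_nonneg v)).2 fun i => ?_
  calc ‖(M *ᵥ v) i‖ ≤ ∑ j, M i j * ‖v‖ := by
        refine (norm_sum_le _ _).trans (sum_le_sum fun j _ => ?_)
        rw [norm_mul, Real.norm_of_nonneg (nonneg_of_mem_rowStochastic hM)]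
        exact mul_le_mul_of_nonneg_left (norm_le_pi_norm v j) (nonneg_of_mem_rowStochastic hM)
    _ = ‖v‖ := by rw [← sum_mul, sum_row_of_mem_rowStochastic hM, one_mul]

theorem summable_geometric_mul_pow_mulVec_apply {γ : ℝ} (hγ0 : 0 ≤ γ) (hγ1 : γ < 1)
    (hM : M ∈ rowStochastic ℝ n) (v : n → ℝ) (i : n) :
    Summable fun t : ℕ => γ ^ t * (M ^ t *ᵥ v) i := by
  refine ((summable_geometric_of_lt_one hγ0 hγ1).mul_left ‖v‖).of_norm_bounded fun t => ?_
  rw [norm_mul, norm_pow, Real.norm_of_nonneg hγ0, mul_comm]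
  gcongr
  exact (norm_le_pi_norm _ i).trans
    (norm_mulVec_le_of_mem_rowStochastic (pow_mem hM t) v)

theorem summable_geometric_mul_dotProduct_pow_mulVec {γ : ℝ} (hγ0 : 0 ≤ γ) (hγ1 : γ < 1)
    (hM : M ∈ rowStochastic ℝ n) (d v : n → ℝ) :
    Summable fun t : ℕ => γ ^ t * d ⬝ᵥ (M ^ t *ᵥ v) := by
  simp only [dotProduct, mul_sum, mul_left_comm (γ ^ _)]
  exact summable_sum fun i _ =>
    (summable_geometric_mul_pow_mulVec_apply hγ0 hγ1 hM v i).mul_left (d i)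

end Matrix

theorem tsum_succ_sub_eq_neg {f : ℕ → ℝ} (hf : Summable f) :
    ∑' t, (f (t + 1) - f t) = -f 0 := by
  rw [((summable_nat_add_iff 1).2 hf).tsum_sub hf, hf.tsum_eq_zero_add]
  ring

section

variable {S A : Type*} [Fintype S] [Fintype A]

def transitionMatrix (P : S → A → S → ℝ) (π : S → A → ℝ) : Matrix S S ℝ :=
  Matrix.of fun s s' => ∑ a, π s a * P s a s'

def policyReward (π r : S → A → ℝ) : S → ℝ :=
  fun s => ∑ a, π s a * r s a

theorem transitionMatrix_mem_rowStochastic [DecidableEq S] {P : S → A → S → ℝ}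
    (hP0 : ∀ s a s', 0 ≤ P s a s') (hP1 : ∀ s a, ∑ s', P s a s' = 1) {π : S → A → ℝ}
    (hπ0 : ∀ s a, 0 ≤ π s a) (hπ1 : ∀ s, ∑ a, π s a = 1) :
    transitionMatrix P π ∈ rowStochastic ℝ S := by
  refine mem_rowStochastic_iff_sum.2 ⟨fun s s' => sum_nonneg fun a _ =>
    mul_nonneg (hπ0 s a) (hP0 s a s'), fun s => ?_⟩
  simp only [transitionMatrix, of_apply]
  rw [sum_comm]
  simp [← mul_sum, hP1, hπ1]

variable (P : S → A → S → ℝ) (π : S → A → ℝ)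

theorem stateDist_succ (d0 : S → ℝ) (t : ℕ) :
    stateDist P π d0 (t + 1) = stateDist P π d0 t ᵥ* transitionMatrix P π := by
  ext s'
  simp [stateDist, vecMul, dotProduct, transitionMatrix, mul_sum, mul_assoc]

theorem expRew_eq_stateDist_dotProduct (r : S → A → ℝ) (d0 : S → ℝ) (t : ℕ) :
    expRew P π r d0 t = stateDist P π d0 t ⬝ᵥ policyReward π r :=
  rfl

variable [DecidableEq S]

theorem stateDist_eq_vecMul_pow (d0 : S → ℝ) (t : ℕ) :
    stateDist P π d0 t = d0 ᵥ* transitionMatrix P π ^ t := by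
  induction t with
  | zero => simp [stateDist]
  | succ t ih => rw [stateDist_succ, ih, vecMul_vecMul, pow_succ]

theorem expRew_eq_dotProduct (r : S → A → ℝ) (d0 : S → ℝ) (t : ℕ) :
    expRew P π r d0 t = d0 ⬝ᵥ (transitionMatrix P π ^ t *ᵥ policyReward π r) := by
  rw [dotProduct_mulVec, ← stateDist_eq_vecMul_pow, expRew_eq_stateDist_dotProduct]

theorem Vval_eq_tsum (γ : ℝ) (r : S → A → ℝ) (s : S) :
    Vval γ P π r s = ∑' t : ℕ, γ ^ t * (transitionMatrix P π ^ t *ᵥ policyReward π r) s := by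
  have hδ : (fun s' => if s' = s then (1 : ℝ) else 0) = Pi.single s 1 := by
    ext s'
    simp [Pi.single_apply]
  simp only [Vval, expRew_eq_dotProduct, hδ, single_dotProduct, one_mul]

variable {P π} {γ : ℝ} (hγ0 : 0 ≤ γ) (hγ1 : γ < 1)
  (hM : transitionMatrix P π ∈ rowStochastic ℝ S)
include hγ0 hγ1 hM

theorem sum_mul_Vval_eq_tsum (r : S → A → ℝ) (d : S → ℝ) :
    ∑ s, d s * Vval γ P π r s = ∑' t : ℕ, γ ^ t * expRew P π r d t := by
  simp only [Vval_eq_tsum, expRew_eq_dotProduct, dotProduct, mul_sum, ← tsum_mul_left]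
  rw [← Summable.tsum_finsetSum fun s _ =>
    (summable_geometric_mul_pow_mulVec_apply hγ0 hγ1 hM _ s).mul_left (d s)]
  simp only [mul_left_comm]

theorem Qval_eq_add_sum_mul_Vval (r : S → A → ℝ) (s : S) (a : A) :
    Qval γ P π r s a = r s a + γ * ∑ s', P s a s' * Vval γ P π r s' := by
  rw [Qval, sum_mul_Vval_eq_tsum hγ0 hγ1 hM]

theorem sum_mul_Aval {π' : S → A → ℝ} (hπ'1 : ∀ s, ∑ a, π' s a = 1) (r : S → A → ℝ) :
    (fun s => ∑ a, π' s a * Aval γ P π r s a) =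
      policyReward π' r + γ • (transitionMatrix P π' *ᵥ Vval γ P π r) - Vval γ P π r := by
  ext s
  have hV : ∑ a, π' s a * Vval γ P π r s = Vval γ P π r s := by rw [← sum_mul, hπ'1, one_mul]
  have hPV : ∑ a, π' s a * (γ * ∑ s', P s a s' * Vval γ P π r s') =
      γ * (transitionMatrix P π' *ᵥ Vval γ P π r) s := by
    simp only [mulVec, dotProduct, transitionMatrix, of_apply, mul_sum, sum_mul]
    rw [sum_comm]
    exact sum_congr rfl fun s' _ => sum_congr rfl fun a _ => by ring
  simp only [Aval, Qval_eq_add_sum_mul_Vval hγ0 hγ1 hM, mul_sub, mul_add, sum_sub_distrib,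
    sum_add_distrib, hV, hPV, policyReward, Pi.add_apply, Pi.sub_apply, Pi.smul_apply, smul_eq_mul]

theorem performance_difference {π' : S → A → ℝ}
    (hM' : transitionMatrix P π' ∈ rowStochastic ℝ S) (hπ'1 : ∀ s, ∑ a, π' s a = 1)
    (r : S → A → ℝ) (d0 : S → ℝ) :
    ∑' t : ℕ, γ ^ t * ∑ s, stateDist P π' d0 t s * ∑ a, π' s a * Aval γ P π r s a =
      ∑ s, d0 s * Vval γ P π' r s - ∑ s, d0 s * Vval γ P π r s := by
  set F : ℕ → ℝ := fun t => γ ^ t * stateDist P π' d0 t ⬝ᵥ Vval γ P π r with hF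
  have hterm : ∀ t, γ ^ t * ∑ s, stateDist P π' d0 t s * ∑ a, π' s a * Aval γ P π r s a =
      γ ^ t * expRew P π' r d0 t + (F (t + 1) - F t) := by
    intro t
    change γ ^ t * (_ ⬝ᵥ fun s => _) = _
    rw [sum_mul_Aval hγ0 hγ1 hM hπ'1, dotProduct_sub, dotProduct_add, dotProduct_smul,
      smul_eq_mul, dotProduct_mulVec, ← stateDist_succ]
    simp only [hF, expRew_eq_stateDist_dotProduct, pow_succ]
    ring
  have hFsum : Summable F := by
    simp only [hF, stateDist_eq_vecMul_pow, ← dotProduct_mulVec]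
    exact summable_geometric_mul_dotProduct_pow_mulVec hγ0 hγ1 hM' d0 _
  have hRsum : Summable fun t : ℕ => γ ^ t * expRew P π' r d0 t := by
    simp only [expRew_eq_dotProduct]
    exact summable_geometric_mul_dotProduct_pow_mulVec hγ0 hγ1 hM' d0 _
  rw [tsum_congr hterm, hRsum.tsum_add (((summable_nat_add_iff 1).2 hFsum).sub hFsum),
    tsum_succ_sub_eq_neg hFsum, ← sum_mul_Vval_eq_tsum hγ0 hγ1 hM']
  simp [hF, stateDist, dotProduct, sub_eq_add_neg]

end

theorem collective_return_difference_general
    {S A ι : Type*} [Fintype S] [Fintype A] [Fintype ι] [DecidableEq S]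
    (γ : ℝ) (hγ0 : 0 ≤ γ) (hγ1 : γ < 1)
    (P : S → A → S → ℝ) (hP0 : ∀ s a s', 0 ≤ P s a s') (hP1 : ∀ s a, ∑ s', P s a s' = 1)
    (πold πnew : S → A → ℝ)
    (hπo0 : ∀ s a, 0 ≤ πold s a) (hπo1 : ∀ s, ∑ a, πold s a = 1)
    (hπn0 : ∀ s a, 0 ≤ πnew s a) (hπn1 : ∀ s, ∑ a, πnew s a = 1)
    (r : ι → S → A → ℝ)
    (d0 : S → ℝ) :
    eta γ P πnew r d0 =
      eta γ P πold r d0 +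
        ∑ i, ∑' t : ℕ, γ ^ t *
          ∑ s, stateDist P πnew d0 t s * ∑ a, πnew s a * Aval γ P πold (r i) s a := by
  have hMold := transitionMatrix_mem_rowStochastic hP0 hP1 hπo0 hπo1
  have hMnew := transitionMatrix_mem_rowStochastic hP0 hP1 hπn0 hπn1
  simp only [eta, performance_difference hγ0 hγ1 hMold hMnew hπn1, sum_sub_distrib]
  ring

/-- policy-difference lemma: for two joint policies `πold`, `πnew`,
`η(πnew) = η(πold) + E_{τ∼πnew}[∑ᵢ ∑ₜ γᵗ Aᵢ^{πold}(sₜ, aₜ)]`. -/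
theorem collective_return_difference
    {S A ι : Type*} [Fintype S] [Fintype A] [Fintype ι] [DecidableEq S]
    (γ : ℝ) (hγ0 : 0 ≤ γ) (hγ1 : γ < 1)
    (P : S → A → S → ℝ) (hP0 : ∀ s a s', 0 ≤ P s a s') (hP1 : ∀ s a, ∑ s', P s a s' = 1)
    (πold πnew : S → A → ℝ)
    (hπo0 : ∀ s a, 0 ≤ πold s a) (hπo1 : ∀ s, ∑ a, πold s a = 1)
    (hπn0 : ∀ s a, 0 ≤ πnew s a) (hπn1 : ∀ s, ∑ a, πnew s a = 1)
    (r : ι → S → A → ℝ)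
    (d0 : S → ℝ) (hd0 : ∀ s, 0 ≤ d0 s) (hd1 : ∑ s, d0 s = 1) :
    eta γ P πnew r d0 =
      eta γ P πold r d0 +
        ∑ i, ∑' t : ℕ, γ ^ t *
          ∑ s, stateDist P πnew d0 t s * ∑ a, πnew s a * Aval γ P πold (r i) s a :=
  collective_return_difference_general γ hγ0 hγ1 P hP0 hP1 πold πnew hπo0 hπo1 hπn0 hπn1 r d0
end

section
/- Let d^π' be a state distribution on a finite state set S, A_i^π'(s,a) real-valued functions bounded on S × A, and for each agent i let π̃^i and π be probability distributions over joint actions given each state. Then Σ_i E_{s∼d^π', a∼π̃^i(·|s)}[A_i^π'(s,a)] − Σ_i E_{s∼d^π', a∼π(·|s)}[A_i^π'(s,a)] ≤ f^π' + Σ_i (1/2) max_{s,a}|A_i^π'(s,a)| · Σ_{s,a}(π̃^i(a|s) − π(a|s))², where f^π' = Σ_i (1/2) max_{s,a}|A_i^π'(s,a)| · |A| · Σ_s (d^π'(s))². -/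
open scoped BigOperators

/-! Pairing each term `d(s) (π̃ⁱ(a|s) − π(a|s)) Aᵢ(s,a)` of the discrepancy with the AM–GM
inequality `|x y| ≤ (x² + y²) / 2` and bounding `|Aᵢ|` by its maximum gives the claim term by
term; summing the `d(s)²` part over the actions produces the factor `|A|`. -/

open Finset

theorem mul_mul_le_half_mul_add_sq {x y a M : ℝ} (ha : |a| ≤ M) :
    x * y * a ≤ (1 / 2) * M * (x ^ 2 + y ^ 2) := by
  have hM : 0 ≤ M := (abs_nonneg a).trans ha
  have amgm : 2 * (|x| * |y|) ≤ x ^ 2 + y ^ 2 := by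
    simpa only [sq_abs, mul_assoc] using two_mul_le_add_sq |x| |y|
  calc x * y * a ≤ |x * y * a| := le_abs_self _
    _ = |x| * |y| * |a| := by rw [abs_mul, abs_mul]
    _ ≤ |x| * |y| * M := by gcongr
    _ ≤ (1 / 2) * M * (x ^ 2 + y ^ 2) := by nlinarith

section Expectation

variable {S A : Type*} [Fintype S] [Fintype A]

theorem sum_mul_sum_mul_sub_sum_mul_sum_mul (d : S → ℝ) (p q f : S → A → ℝ) :
    (∑ s, d s * ∑ a, p s a * f s a) - (∑ s, d s * ∑ a, q s a * f s a) =
      ∑ s, ∑ a, d s * (p s a - q s a) * f s a := by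
  simp only [← sum_sub_distrib, mul_sum, ← mul_sub]
  exact sum_congr rfl fun s _ => sum_congr rfl fun a _ => by ring

theorem sum_mul_sum_mul_sub_le_of_abs_le (d : S → ℝ) (p q f : S → A → ℝ) {M : ℝ}
    (hf : ∀ s a, |f s a| ≤ M) :
    (∑ s, d s * ∑ a, p s a * f s a) - (∑ s, d s * ∑ a, q s a * f s a) ≤
      (1 / 2) * M * (Fintype.card A : ℝ) * ∑ s, d s ^ 2 +
        (1 / 2) * M * ∑ s, ∑ a, (p s a - q s a) ^ 2 := by
  have hsplit : (1 / 2) * M * (Fintype.card A : ℝ) * ∑ s, d s ^ 2 +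
      (1 / 2) * M * ∑ s, ∑ a, (p s a - q s a) ^ 2 =
      ∑ s, ∑ a, (1 / 2) * M * (d s ^ 2 + (p s a - q s a) ^ 2) := by
    simp only [mul_add, sum_add_distrib, ← mul_sum, sum_const, card_univ, nsmul_eq_mul]
    ring
  rw [sum_mul_sum_mul_sub_sum_mul_sum_mul, hsplit]
  exact sum_le_sum fun s _ => sum_le_sum fun a _ => mul_mul_le_half_mul_add_sq (hf s a)

end Expectation

theorem suggesting_policy_discrepancy_bound_general
    {S A ι : Type*} [Fintype S] [Fintype A] [Fintype ι] [Nonempty S] [Nonempty A]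
    (d : S → ℝ)
    (Adv : ι → S → A → ℝ)
    (πt : ι → S → A → ℝ)
    (π : S → A → ℝ) :
    (∑ i, ∑ s, d s * ∑ a, πt i s a * Adv i s a) -
      (∑ i, ∑ s, d s * ∑ a, π s a * Adv i s a) ≤
    (∑ i, (1 / 2) *
        Finset.univ.sup' Finset.univ_nonempty (fun sa : S × A => |Adv i sa.1 sa.2|) *
        (Fintype.card A : ℝ) * ∑ s, (d s) ^ 2) +
    ∑ i, (1 / 2) *
        Finset.univ.sup' Finset.univ_nonempty (fun sa : S × A => |Adv i sa.1 sa.2|) *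
        ∑ s, ∑ a, (πt i s a - π s a) ^ 2 := by
  rw [← sum_sub_distrib, ← sum_add_distrib]
  exact sum_le_sum fun i _ => sum_mul_sum_mul_sub_le_of_abs_le d (πt i) π (Adv i)
    fun s a => le_sup' (fun sa : S × A => |Adv i sa.1 sa.2|) (mem_univ (s, a))

/-- Lemma 2: the discrepancy between the total expected advantages
under the suggesting joint policies `π̃ⁱ` and under the true joint policy `π` is
bounded by `f^{π'} + ∑ᵢ (1/2) maxₛₐ|Aᵢ^{π'}(s,a)| · ∑_{s,a}(π̃ⁱ(a|s) − π(a|s))²`,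
where `f^{π'} = ∑ᵢ (1/2) maxₛₐ|Aᵢ^{π'}(s,a)| · |𝒜| · ‖d^{π'}‖₂²`. -/
theorem suggesting_policy_discrepancy_bound
    {S A ι : Type*} [Fintype S] [Fintype A] [Fintype ι] [Nonempty S] [Nonempty A]
    (d : S → ℝ) (hd0 : ∀ s, 0 ≤ d s) (hd1 : ∑ s, d s = 1)
    (Adv : ι → S → A → ℝ)
    (πt : ι → S → A → ℝ)
    (hπt0 : ∀ i s a, 0 ≤ πt i s a) (hπt1 : ∀ i s, ∑ a, πt i s a = 1)
    (π : S → A → ℝ)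
    (hπ0 : ∀ s a, 0 ≤ π s a) (hπ1 : ∀ s, ∑ a, π s a = 1) :
    (∑ i, ∑ s, d s * ∑ a, πt i s a * Adv i s a) -
      (∑ i, ∑ s, d s * ∑ a, π s a * Adv i s a) ≤
    (∑ i, (1 / 2) *
        Finset.univ.sup' Finset.univ_nonempty (fun sa : S × A => |Adv i sa.1 sa.2|) *
        (Fintype.card A : ℝ) * ∑ s, (d s) ^ 2) +
    ∑ i, (1 / 2) *
        Finset.univ.sup' Finset.univ_nonempty (fun sa : S × A => |Adv i sa.1 sa.2|) *
        ∑ s, ∑ a, (πt i s a - π s a) ^ 2 :=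
  suggesting_policy_discrepancy_bound_general d Adv πt π
end
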